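/- Let Σ be a real (n+n)×(n+n) matrix written in block form Σ = [[Σ₁₁, Σ₁₂],[Σ₁₂ᵀ, Σ₂₂]] with each block n×n, and suppose Σ is symmetric positive definite. Define Z = Σ₁₁⁻¹ and P = Σ₁₁ − Σ₁₂·Σ₂₂⁻¹·Σ₁₂ᵀ. Then Z is positive definite, P is positive definite, Z⁻¹ − P = Σ₁₂·Σ₂₂⁻¹·Σ₁₂ᵀ is positive semidefinite, and consequently every eigenvalue λ ∈ ℂ of Z·P (regarded as a complex matrix via the entrywise embedding ℝ → ℂ) satisfies |λ| ≤ 1. -/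

import Mathlib

/-!
Evaluating the quadratic form of `Σ` at `(x, -Σ₂₂⁻¹ Σ₁₂ᵀ x)` leaves exactly `xᵀ P x`, so the Schur
complement `P` is positive definite, and `Z⁻¹ - P = Σ₁₂ Σ₂₂⁻¹ Σ₁₂ᵀ ≥ 0`. If `v` is an eigenvector
of `Z P` for `λ`, then `P v = λ Σ₁₁ v`, so `v* P v = λ v* Σ₁₁ v` with `0 ≤ v* P v ≤ v* Σ₁₁ v` and
`v* Σ₁₁ v > 0`; hence `|λ| ≤ 1`. Positivity survives complexification because the real part of
`v* A v` is `xᵀ A x + yᵀ A y` for `v = x + i y`.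
-/

open Matrix
open scoped ComplexOrder

namespace Matrix

variable {m n : Type*}

section Blocks

variable {K : Type*} [Field K] [PartialOrder K] [StarRing K]

theorem PosDef.toBlocks₁₁ {M : Matrix (m ⊕ n) (m ⊕ n) K} (hM : M.PosDef) : M.toBlocks₁₁.PosDef :=
  hM.submatrix Sum.inl_injective

theorem PosDef.toBlocks₂₂ {M : Matrix (m ⊕ n) (m ⊕ n) K} (hM : M.PosDef) : M.toBlocks₂₂.PosDef :=
  hM.submatrix Sum.inr_injective

variable [Fintype m] [Fintype n] [StarOrderedRing K] [DecidableEq n]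

theorem PosDef.sub_mul_inv_mul_conjTranspose_of_fromBlocks {A : Matrix m m K} {B : Matrix m n K}
    {D : Matrix n n K} (h : (fromBlocks A B Bᴴ D).PosDef) : (A - B * D⁻¹ * Bᴴ).PosDef := by
  have hD : D.PosDef := by simpa using h.toBlocks₂₂
  have := hD.isUnit.invertible
  refine .of_dotProduct_mulVec_pos
    ((PosDef.fromBlocks₂₂ A B hD).mp h.posSemidef).isHermitian fun x hx => ?_
  have hpos := h.dotProduct_mulVec_pos (x := x ⊕ᵥ -((D⁻¹ * Bᴴ) *ᵥ x)) fun h0 =>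
    hx (funext fun i => congrFun h0 (Sum.inl i))
  rwa [dotProduct_mulVec, schur_complement_eq₂₂ A B _ _ hD.isHermitian, add_neg_cancel,
    dotProduct_zero, zero_add, ← dotProduct_mulVec] at hpos

end Blocks

variable [Fintype n]

theorem map_nonsing_inv {α β : Type*} [CommRing α] [CommRing β] [DecidableEq n] (f : α →+* β)
    {A : Matrix n n α} (hA : IsUnit A.det) : A⁻¹.map f = (A.map f)⁻¹ := by
  refine (inv_eq_left_inv ?_).symm
  rw [← Matrix.map_mul, nonsing_inv_mul _ hA, Matrix.map_one _ f.map_zero f.map_one]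

theorem norm_le_one_of_mem_spectrum_inv_mul {𝕜 : Type*} [RCLike 𝕜] [DecidableEq n]
    {A B : Matrix n n 𝕜} (hA : A.PosDef) (hB : B.PosSemidef) (hBA : (A - B).PosSemidef) {μ : 𝕜}
    (hμ : μ ∈ spectrum 𝕜 (A⁻¹ * B)) : ‖μ‖ ≤ 1 := by
  rw [← spectrum_toLin', ← Module.End.hasEigenvalue_iff_mem_spectrum] at hμ
  obtain ⟨v, hv⟩ := hμ.exists_hasEigenvector
  have hBv : B *ᵥ v = μ • (A *ᵥ v) := by
    have := congrArg (A *ᵥ ·) hv.apply_eq_smul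
    rwa [toLin'_apply, mulVec_mulVec, mul_nonsing_inv_cancel_left _ _
      ((isUnit_iff_isUnit_det A).mp hA.isUnit), mulVec_smul] at this
  have hμba : star v ⬝ᵥ B *ᵥ v = μ * (star v ⬝ᵥ A *ᵥ v) := by
    rw [hBv, dotProduct_smul, smul_eq_mul]
  set a := star v ⬝ᵥ A *ᵥ v
  set b := star v ⬝ᵥ B *ᵥ v
  have ha : 0 < a := hA.dotProduct_mulVec_pos hv.2
  have hb : 0 ≤ b := hB.dotProduct_mulVec_nonneg v
  have hba : b ≤ a := by
    simpa [sub_mulVec, dotProduct_sub] using hBA.dotProduct_mulVec_nonneg v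
  have hnorm : ‖b‖ ≤ ‖a‖ := by
    rwa [← RCLike.ofReal_le_ofReal (K := 𝕜), RCLike.norm_of_nonneg' hb,
      RCLike.norm_of_nonneg' ha.le]
  rw [hμba, norm_mul] at hnorm
  exact (mul_le_iff_le_one_left (norm_pos_iff.mpr ha.ne')).mp hnorm

theorem re_star_dotProduct_map_ofReal_mulVec (A : Matrix n n ℝ) (v : n → ℂ) :
    (star v ⬝ᵥ A.map Complex.ofReal *ᵥ v).re =
      (fun i => (v i).re) ⬝ᵥ A *ᵥ (fun i => (v i).re) +
        (fun i => (v i).im) ⬝ᵥ A *ᵥ (fun i => (v i).im) := by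
  simp only [dotProduct, mulVec, Complex.re_sum, Finset.mul_sum, ← Finset.sum_add_distrib]
  refine Finset.sum_congr rfl fun i _ => Finset.sum_congr rfl fun j _ => ?_
  simp

theorem PosSemidef.map_ofReal {A : Matrix n n ℝ} (hA : A.PosSemidef) :
    (A.map Complex.ofReal).PosSemidef := by
  have hH : (A.map Complex.ofReal).IsHermitian :=
    hA.isHermitian.map _ fun x => (Complex.conj_ofReal x).symm
  refine .of_dotProduct_mulVec_nonneg hH fun v =>
    RCLike.nonneg_iff.mpr ⟨?_, hH.im_star_dotProduct_mulVec_self v⟩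
  rw [RCLike.re_to_complex, re_star_dotProduct_map_ofReal_mulVec]
  exact add_nonneg (hA.dotProduct_mulVec_nonneg _) (hA.dotProduct_mulVec_nonneg _)

theorem PosDef.map_ofReal [DecidableEq n] {A : Matrix n n ℝ} (hA : A.PosDef) :
    (A.map Complex.ofReal).PosDef :=
  hA.posSemidef.map_ofReal.posDef_iff_isUnit.mpr (hA.isUnit.map Complex.ofRealHom.mapMatrix)

end Matrix

/-- For a symmetric positive definite block matrix
`Σ = [[S₁₁, S₁₂],[S₁₂ᵀ, S₂₂]]`, with `Z = S₁₁⁻¹` and `P` the Schur complement of `S₂₂`,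
one has `Z > 0`, `P > 0`, `Z⁻¹ − P = S₁₂·S₂₂⁻¹·S₁₂ᵀ ≥ 0`, and every complex eigenvalue
of `Z·P` has modulus at most 1. -/
theorem stmt_6 {n : ℕ} (S₁₁ S₁₂ S₂₂ : Matrix (Fin n) (Fin n) ℝ)
    (hSg : (fromBlocks S₁₁ S₁₂ S₁₂ᵀ S₂₂).PosDef)
    (Z P : Matrix (Fin n) (Fin n) ℝ)
    (hZ : Z = S₁₁⁻¹) (hP : P = S₁₁ - S₁₂ * S₂₂⁻¹ * S₁₂ᵀ) :
    Z.PosDef ∧ P.PosDef ∧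
    Z⁻¹ - P = S₁₂ * S₂₂⁻¹ * S₁₂ᵀ ∧
    (S₁₂ * S₂₂⁻¹ * S₁₂ᵀ).PosSemidef ∧
    (∀ lam : ℂ, lam ∈ spectrum ℂ ((Z * P).map (Complex.ofReal)) →
      ‖lam‖ ≤ 1) := by
  rw [← conjTranspose_eq_transpose_of_trivial] at hSg hP ⊢
  have hS₁₁ : S₁₁.PosDef := by simpa using hSg.toBlocks₁₁
  have hS₂₂ : S₂₂.PosDef := by simpa using hSg.toBlocks₂₂
  have hQ : (S₁₂ * S₂₂⁻¹ * S₁₂ᴴ).PosSemidef :=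
    hS₂₂.inv.posSemidef.mul_mul_conjTranspose_same S₁₂
  have hPpos : P.PosDef := hP ▸ hSg.sub_mul_inv_mul_conjTranspose_of_fromBlocks
  have hdet : IsUnit S₁₁.det := (isUnit_iff_isUnit_det _).mp hS₁₁.isUnit
  have hdiff : Z⁻¹ - P = S₁₂ * S₂₂⁻¹ * S₁₂ᴴ := by
    rw [hZ, nonsing_inv_nonsing_inv _ hdet, hP, sub_sub_cancel]
  refine ⟨hZ ▸ hS₁₁.inv, hPpos, hdiff, hQ, fun lam hlam => ?_⟩
  have hmap : (Z * P).map Complex.ofReal = (S₁₁.map Complex.ofReal)⁻¹ * P.map Complex.ofReal := by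
    rw [hZ]
    exact Matrix.map_mul.trans
      (congrArg (· * P.map Complex.ofReal) (map_nonsing_inv Complex.ofRealHom hdet))
  have hgap : (S₁₁.map Complex.ofReal - P.map Complex.ofReal).PosSemidef := by
    rw [← Matrix.map_sub _ Complex.ofReal_sub, ← nonsing_inv_nonsing_inv _ hdet, ← hZ, hdiff]
    exact hQ.map_ofReal
  exact norm_le_one_of_mem_spectrum_inv_mul hS₁₁.map_ofReal hPpos.posSemidef.map_ofReal hgap
    (hmap ▸ hlam)
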